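/- arXiv:2506.06543 — 6 statements merged into one kernel-verified Lean document; each statement's English description precedes it below -/
import Mathlib

section
/- Let ā > 0, d̄, s, u₀ ∈ ℝ, P ∈ ℕ, and coefficients a₀, …, a_P ∈ ℝ. Define u : ℝ → ℝ by u(τ) = (u₀ − s/(2ā) − (d̄/ā)·Σ_{p=0}^{P} (a_p/2)·(−1)^p · p!/(2ā)^p) · e^{−2āτ} + (d̄/ā)·Σ_{p=0}^{P} (a_p/2)·Σ_{q=0}^{p} τ^{p−q}·(−1)^q · p!/((2ā)^q (p−q)!) + s/(2ā). Then u is differentiable, u(0) = u₀, and for all τ, u'(τ) = d̄·Σ_{p=0}^{P} a_p τ^p − 2ā·u(τ) + s. -/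
open Real Finset

/-!
With `b = 2ā`, the equation `y' = b (τ ^ p - y)` has the polynomial particular solution
`g p = monomialResponse b p`, and reindexing its defining sum gives
`g (p + 1) = τ ^ (p + 1) - (p + 1) / b * g p`; induction on `p` then yields
`g p' = b (τ ^ p - g p)` and `g p 0 = (-1) ^ p p! / b ^ p`. The solution `u` is a linear
combination of these, the constant particular solution `s / b` and the homogeneous solution
`e ^ (-b τ)`, whose coefficient is chosen so that `u 0 = u₀`.
-/

noncomputable def monomialResponse (b : ℝ) (p : ℕ) (τ : ℝ) : ℝ :=
  ∑ q ∈ range (p + 1), τ ^ (p - q) * (-1 : ℝ) ^ q * (p.factorial : ℝ) /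
    (b ^ q * ((p - q).factorial : ℝ))

namespace monomialResponse

variable {b : ℝ}

theorem zero (τ : ℝ) : monomialResponse b 0 τ = 1 := by
  simp [monomialResponse]

theorem succ (hb : b ≠ 0) (p : ℕ) (τ : ℝ) :
    monomialResponse b (p + 1) τ = τ ^ (p + 1) - (p + 1) / b * monomialResponse b p τ := by
  rw [monomialResponse, sum_range_succ', monomialResponse, mul_sum, add_comm, ← sub_neg_eq_add,
    ← sum_neg_distrib]
  congr 1
  · simp [Nat.factorial_ne_zero]
  refine sum_congr rfl fun q _ => ?_
  rw [Nat.add_sub_add_right, Nat.factorial_succ]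
  push_cast
  field_simp
  ring

theorem apply_zero (hb : b ≠ 0) (p : ℕ) :
    monomialResponse b p 0 = (-1 : ℝ) ^ p * p.factorial / b ^ p := by
  induction p with
  | zero => simp [zero]
  | succ p ih =>
    rw [succ hb, ih, Nat.factorial_succ]
    push_cast
    field_simp
    ring

theorem hasDerivAt (hb : b ≠ 0) (p : ℕ) (τ : ℝ) :
    HasDerivAt (monomialResponse b p) (b * (τ ^ p - monomialResponse b p τ)) τ := by
  induction p generalizing τ with
  | zero => simpa [funext zero] using hasDerivAt_const τ (1 : ℝ)
  | succ p ih =>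
    have h := (hasDerivAt_pow (p + 1) τ).fun_sub ((ih τ).const_mul ((p + 1) / b))
    rw [funext (succ hb p)]
    refine h.congr_deriv ?_
    rw [Nat.add_sub_cancel]
    push_cast
    field_simp
    ring

theorem hasDerivAt_sum_mul (hb : b ≠ 0) (c : ℕ → ℝ) (S : Finset ℕ) (τ : ℝ) :
    HasDerivAt (fun t => ∑ p ∈ S, c p * monomialResponse b p t)
      (b * (∑ p ∈ S, c p * τ ^ p - ∑ p ∈ S, c p * monomialResponse b p τ)) τ := by
  refine (HasDerivAt.fun_sum fun p _ => (hasDerivAt hb p τ).const_mul (c p)).congr_deriv ?_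
  rw [← sum_sub_distrib, mul_sum]
  exact sum_congr rfl fun p _ => by ring

end monomialResponse

/-- Closed-form solution of the P-th order representative temporal ODE of the
diffusion operator: `du/dτ = d̄ (Σ_{p=0}^P a_p τ^p) − 2ā u + s`. -/
theorem stmt_0 (abar dbar s u₀ : ℝ) (habar : 0 < abar) (P : ℕ) (a : ℕ → ℝ)
    (u : ℝ → ℝ)
    (hu : u = fun τ =>
      (u₀ - s / (2 * abar) -
          (dbar / abar) * ∑ p ∈ Finset.range (P + 1),
            (a p / 2) * (-1 : ℝ) ^ p * (Nat.factorial p : ℝ) / (2 * abar) ^ p) *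
        Real.exp (-2 * abar * τ) +
      (dbar / abar) * ∑ p ∈ Finset.range (P + 1),
        (a p / 2) * ∑ q ∈ Finset.range (p + 1),
          τ ^ (p - q) * (-1 : ℝ) ^ q * (Nat.factorial p : ℝ) /
            ((2 * abar) ^ q * (Nat.factorial (p - q) : ℝ)) +
      s / (2 * abar)) :
    Differentiable ℝ u ∧ u 0 = u₀ ∧
      ∀ τ : ℝ, deriv u τ =
        dbar * (∑ p ∈ Finset.range (P + 1), a p * τ ^ p) - 2 * abar * u τ + s := by
  have hb : 2 * abar ≠ 0 := by positivity
  set C := u₀ - s / (2 * abar) - (dbar / abar) * ∑ p ∈ range (P + 1),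
    (a p / 2) * (-1 : ℝ) ^ p * (p.factorial : ℝ) / (2 * abar) ^ p
  replace hu : u = fun τ => C * exp (-2 * abar * τ) +
      (dbar / abar) * ∑ p ∈ range (P + 1), (a p / 2) * monomialResponse (2 * abar) p τ +
      s / (2 * abar) := hu
  have hderiv (τ : ℝ) :
      HasDerivAt u (dbar * (∑ p ∈ range (P + 1), a p * τ ^ p) - 2 * abar * u τ + s) τ := by
    have hexp := ((hasDerivAt_id' τ).const_mul (-2 * abar)).exp.const_mul C
    have hpoly := (monomialResponse.hasDerivAt_sum_mul hb (fun p => a p / 2) (range (P + 1))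
      τ).const_mul (dbar / abar)
    rw [hu]
    refine ((hexp.add hpoly).add_const _).congr_deriv ?_
    have hhalf :
        ∑ p ∈ range (P + 1), a p / 2 * τ ^ p = (∑ p ∈ range (P + 1), a p * τ ^ p) / 2 := by
      rw [sum_div]
      exact sum_congr rfl fun p _ => by ring
    rw [hhalf]
    field_simp
    ring
  refine ⟨fun τ => (hderiv τ).differentiableAt, ?_, fun τ => (hderiv τ).deriv⟩
  simp only [hu, C, monomialResponse.apply_zero hb, mul_zero, exp_zero, mul_one, mul_div_assoc,
    mul_assoc]
  ring
end

section
/- Let A > 0, B ∈ ℝ, x_i ∈ ℝ, Δx > 0, and α, β ∈ ℝ. Suppose u : ℝ → ℝ is twice differentiable with u''(x) − A·u(x) = B for all x, u(x_i − Δx) = α, and u(x_i + Δx) = β. Then u(x_i) = −B/A + (α + β + 2B/A)/(e^{√A·Δx} + e^{−√A·Δx}). -/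
/-!
Shifting by the particular solution `-B/A` turns the equation into `v'' = s² v` with `s = √A`.
Its solutions are combinations `P e^{sx} + Q e^{-sx}`, because `(v' - k v) e^{kx}` is constant for
`k = ±s`; and for such combinations `v (x - d) + v (x + d) = (e^{sd} + e^{-sd}) v x`, which is the
update formula evaluated at `x = x_i`, `d = Δx`.
-/

open Real

theorem mul_exp_add_mul_exp_neg_symm_sum (P Q k x d : ℝ) :
    (P * exp (k * (x - d)) + Q * exp (-(k * (x - d)))) +
        (P * exp (k * (x + d)) + Q * exp (-(k * (x + d)))) =
      (exp (k * d) + exp (-(k * d))) * (P * exp (k * x) + Q * exp (-(k * x))) := by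
  simp only [sub_eq_add_neg, mul_add, mul_neg, neg_add, neg_neg, exp_add]
  ring

section HomogeneousSolution

variable {v : ℝ → ℝ} {k : ℝ}

theorem hasDerivAt_deriv_sub_mul_mul_exp (hv : Differentiable ℝ v)
    (hv' : Differentiable ℝ (deriv v)) (hODE : ∀ x, deriv (deriv v) x = k ^ 2 * v x) (x : ℝ) :
    HasDerivAt (fun y ↦ (deriv v y - k * v y) * exp (k * y)) 0 x := by
  have hexp : HasDerivAt (fun y ↦ exp (k * y)) (exp (k * x) * k) x := by
    simpa using ((hasDerivAt_id x).const_mul k).exp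
  refine ((((hv' x).hasDerivAt).sub ((hv x).hasDerivAt.const_mul k)).mul hexp).congr_deriv ?_
  rw [hODE x, Pi.sub_apply]
  ring

theorem deriv_sub_mul_mul_exp_eq (hv : Differentiable ℝ v)
    (hv' : Differentiable ℝ (deriv v)) (hODE : ∀ x, deriv (deriv v) x = k ^ 2 * v x) (x : ℝ) :
    (deriv v x - k * v x) * exp (k * x) = deriv v 0 - k * v 0 := by
  have hconst := hasDerivAt_deriv_sub_mul_mul_exp hv hv' hODE
  simpa using is_const_of_deriv_eq_zero (fun y ↦ (hconst y).differentiableAt)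
    (fun y ↦ (hconst y).deriv) x 0

theorem exists_eq_mul_exp_add_mul_exp_neg (hk : k ≠ 0) (hv : Differentiable ℝ v)
    (hv' : Differentiable ℝ (deriv v)) (hODE : ∀ x, deriv (deriv v) x = k ^ 2 * v x) :
    ∃ P Q : ℝ, ∀ x, v x = P * exp (k * x) + Q * exp (-(k * x)) := by
  have hODE_neg : ∀ x, deriv (deriv v) x = (-k) ^ 2 * v x := by simpa using hODE
  refine ⟨(deriv v 0 + k * v 0) / (2 * k), -(deriv v 0 - k * v 0) / (2 * k), fun x ↦ ?_⟩
  have hplus := deriv_sub_mul_mul_exp_eq hv hv' hODE x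
  have hminus := deriv_sub_mul_mul_exp_eq hv hv' hODE_neg x
  have hinv : exp (k * x) * exp (-(k * x)) = 1 := by rw [← exp_add]; simp
  simp only [neg_mul, sub_neg_eq_add] at hminus
  field_simp
  linear_combination exp (k * x) * hminus - exp (-(k * x)) * hplus - 2 * k * v x * hinv

theorem add_eq_exp_add_exp_neg_mul_of_deriv_deriv_eq (hk : k ≠ 0) (hv : Differentiable ℝ v)
    (hv' : Differentiable ℝ (deriv v)) (hODE : ∀ x, deriv (deriv v) x = k ^ 2 * v x) (x d : ℝ) :
    v (x - d) + v (x + d) = (exp (k * d) + exp (-(k * d))) * v x := by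
  obtain ⟨P, Q, hPQ⟩ := exists_eq_mul_exp_add_mul_exp_neg hk hv hv' hODE
  simp only [hPQ, mul_exp_add_mul_exp_neg_symm_sum]

end HomogeneousSolution

theorem stmt_2_general (A B xi Δx α β : ℝ) (hA : 0 < A) (u : ℝ → ℝ)
    (hu : Differentiable ℝ u) (hu' : Differentiable ℝ (deriv u))
    (hODE : ∀ x : ℝ, deriv (deriv u) x - A * u x = B)
    (hbc₁ : u (xi - Δx) = α) (hbc₂ : u (xi + Δx) = β) :
    u xi = -B / A +
      (α + β + 2 * (B / A)) /
        (Real.exp (Real.sqrt A * Δx) + Real.exp (-(Real.sqrt A * Δx))) := by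
  set v : ℝ → ℝ := fun x ↦ u x + B / A
  have hderiv : deriv v = deriv u := funext fun x ↦ deriv_add_const _
  have hv : Differentiable ℝ v := hu.add_const _
  have hvODE : ∀ x, deriv (deriv v) x = sqrt A ^ 2 * v x := by
    intro x
    rw [hderiv, sq_sqrt hA.le, mul_add, mul_div_cancel₀ _ hA.ne']
    linarith [hODE x]
  have hsum := add_eq_exp_add_exp_neg_mul_of_deriv_deriv_eq (sqrt_pos.mpr hA).ne' hv
    (hderiv ▸ hu') hvODE xi Δx
  simp only [v, hbc₁, hbc₂] at hsum
  have hpos : 0 < exp (sqrt A * Δx) + exp (-(sqrt A * Δx)) := by positivity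
  rw [← sub_eq_iff_eq_add', eq_div_iff hpos.ne']
  linear_combination -hsum

/-- Spatial-ODE (implicit) scheme for the 1D diffusion equation: the value at the
midpoint of a solution of `u'' − A u = B` with boundary values at `x_i ± Δx`. -/
theorem stmt_2 (A B xi Δx α β : ℝ) (hA : 0 < A) (hΔx : 0 < Δx) (u : ℝ → ℝ)
    (hu : Differentiable ℝ u) (hu' : Differentiable ℝ (deriv u))
    (hODE : ∀ x : ℝ, deriv (deriv u) x - A * u x = B)
    (hbc₁ : u (xi - Δx) = α) (hbc₂ : u (xi + Δx) = β) :
    u xi = -B / A +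
      (α + β + 2 * (B / A)) /
        (Real.exp (Real.sqrt A * Δx) + Real.exp (-(Real.sqrt A * Δx))) :=
  stmt_2_general A B xi Δx α β hA u hu hu' hODE hbc₁ hbc₂
end

section
/- Let A > 0, B, C ∈ ℝ, x_i ∈ ℝ, Δx > 0, and α, β ∈ ℝ, and set λ₁ = (C + √(C² + 4A))/2 and λ₂ = (C − √(C² + 4A))/2. Suppose u : ℝ → ℝ is twice differentiable with u''(x) − C·u'(x) − A·u(x) = B for all x, u(x_i − Δx) = α, and u(x_i + Δx) = β. Then u(x_i) = k₁α + k₂β + k₃, where k₁ = (e^{λ₂Δx} − e^{λ₁Δx})/(e^{(λ₂−λ₁)Δx} − e^{(λ₁−λ₂)Δx}), k₂ = (e^{−λ₁Δx} − e^{−λ₂Δx})/(e^{(λ₂−λ₁)Δx} − e^{(λ₁−λ₂)Δx}), and k₃ = −B/A + (B/A)·(e^{λ₂Δx} − e^{λ₁Δx} + e^{−λ₁Δx} − e^{−λ₂Δx})/(e^{(λ₂−λ₁)Δx} − e^{(λ₁−λ₂)Δx}). -/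
/-!
Since `A > 0`, the characteristic polynomial `λ² − Cλ − A` has the distinct real roots `λ₁, λ₂`,
so `u + B/A` solves the homogeneous equation and is a combination `c₁ e^{λ₁x} + c₂ e^{λ₂x}`
(factor the operator as `(d/dx − λ₁)(d/dx − λ₂)` and integrate two first-order equations).
The weights `k₁, k₂` are exactly those for which `e^{λx_i} = k₁ e^{λ(x_i−Δx)} + k₂ e^{λ(x_i+Δx)}`
holds for both `λ = λ₁` and `λ = λ₂`; `k₃` accounts for the shift by `B/A`.
-/

open Real

theorem eq_mul_exp_of_hasDerivAt {f : ℝ → ℝ} {a : ℝ} (hf : ∀ x, HasDerivAt f (a * f x) x)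
    (x : ℝ) : f x = f 0 * exp (a * x) := by
  have hderiv : ∀ y, HasDerivAt (fun y => f y * exp (-a * y)) 0 y := fun y =>
    ((hf y).mul (hasDerivAt_const_mul (x := y) (-a)).exp).congr_deriv (by ring)
  have hconst := is_const_of_deriv_eq_zero (fun y => (hderiv y).differentiableAt)
    (fun y => (hderiv y).deriv) x 0
  simp only [mul_zero, exp_zero, mul_one] at hconst
  rw [← hconst, mul_assoc, ← exp_add, neg_mul, neg_add_cancel, exp_zero, mul_one]

theorem exists_eq_exp_add_exp {l₁ l₂ : ℝ} (hl : l₁ ≠ l₂) {v v' v'' : ℝ → ℝ}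
    (hv : ∀ x, HasDerivAt v (v' x) x) (hv' : ∀ x, HasDerivAt v' (v'' x) x)
    (hode : ∀ x, v'' x - (l₁ + l₂) * v' x + l₁ * l₂ * v x = 0) :
    ∃ c₁ c₂ : ℝ, ∀ x, v x = c₁ * exp (l₁ * x) + c₂ * exp (l₂ * x) := by
  set K := v' 0 - l₂ * v 0
  have hw : ∀ x, v' x - l₂ * v x = K * exp (l₁ * x) :=
    eq_mul_exp_of_hasDerivAt fun x =>
      ((hv' x).sub ((hv x).const_mul l₂)).congr_deriv (by linear_combination hode x)
  set c₁ := K / (l₁ - l₂)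
  have hc₁ : c₁ * (l₁ - l₂) = K := div_mul_cancel₀ K (sub_ne_zero.mpr hl)
  have hz : ∀ x, v x - c₁ * exp (l₁ * x) = (v 0 - c₁ * exp (l₁ * 0)) * exp (l₂ * x) :=
    eq_mul_exp_of_hasDerivAt fun x =>
      ((hv x).sub ((hasDerivAt_const_mul (x := x) l₁).exp.const_mul c₁)).congr_deriv
        (by linear_combination hw x - exp (l₁ * x) * hc₁)
  exact ⟨c₁, v 0 - c₁ * exp (l₁ * 0), fun x => by linear_combination hz x⟩

noncomputable def midpointWeightLeft (l₁ l₂ h : ℝ) : ℝ :=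
  (exp (l₂ * h) - exp (l₁ * h)) / (exp ((l₂ - l₁) * h) - exp ((l₁ - l₂) * h))

noncomputable def midpointWeightRight (l₁ l₂ h : ℝ) : ℝ :=
  (exp (-(l₁ * h)) - exp (-(l₂ * h))) / (exp ((l₂ - l₁) * h) - exp ((l₁ - l₂) * h))

theorem midpointWeightLeft_comm (l₁ l₂ h : ℝ) :
    midpointWeightLeft l₂ l₁ h = midpointWeightLeft l₁ l₂ h := by
  rw [midpointWeightLeft, midpointWeightLeft, ← neg_sub, ← neg_sub (exp ((l₂ - l₁) * h)),
    neg_div_neg_eq]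

theorem midpointWeightRight_comm (l₁ l₂ h : ℝ) :
    midpointWeightRight l₂ l₁ h = midpointWeightRight l₁ l₂ h := by
  rw [midpointWeightRight, midpointWeightRight, ← neg_sub, ← neg_sub (exp ((l₂ - l₁) * h)),
    neg_div_neg_eq]

theorem exp_sub_exp_ne_zero {l₁ l₂ h : ℝ} (hl : l₁ ≠ l₂) (hh : h ≠ 0) :
    exp ((l₂ - l₁) * h) - exp ((l₁ - l₂) * h) ≠ 0 := by
  refine sub_ne_zero.mpr fun heq => hh ?_
  have hexp := exp_injective heq
  have hzero : (l₁ - l₂) * h = 0 := by linarith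
  exact (mul_eq_zero.mp hzero).resolve_left (sub_ne_zero.mpr hl)

theorem exp_mul_eq_midpointWeight {l₁ l₂ h : ℝ} (hl : l₁ ≠ l₂) (hh : h ≠ 0) (x : ℝ) :
    exp (l₁ * x) = midpointWeightLeft l₁ l₂ h * exp (l₁ * (x - h)) +
      midpointWeightRight l₁ l₂ h * exp (l₁ * (x + h)) := by
  have hD := exp_sub_exp_ne_zero hl hh
  rw [midpointWeightLeft, midpointWeightRight, div_mul_eq_mul_div, div_mul_eq_mul_div, ← add_div, eq_div_iff hD]
  simp only [sub_mul, mul_sub, mul_add, exp_sub, exp_add, exp_neg]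
  field_simp
  ring

theorem eq_midpointWeight_of_eq_exp_add_exp {l₁ l₂ h c₁ c₂ : ℝ} (hl : l₁ ≠ l₂) (hh : h ≠ 0)
    {v : ℝ → ℝ} (hv : ∀ x, v x = c₁ * exp (l₁ * x) + c₂ * exp (l₂ * x)) (x : ℝ) :
    v x = midpointWeightLeft l₁ l₂ h * v (x - h) + midpointWeightRight l₁ l₂ h * v (x + h) := by
  have h₁ := exp_mul_eq_midpointWeight hl hh x
  have h₂ := exp_mul_eq_midpointWeight hl.symm hh x
  rw [midpointWeightLeft_comm, midpointWeightRight_comm] at h₂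
  rw [hv, hv, hv]
  linear_combination c₁ * h₁ + c₂ * h₂

/-- Spatial-ODE scheme for the 1D linear advection–diffusion equation without
splitting: midpoint value of a solution of `u'' − C u' − A u = B` with boundary
values at `x_i ± Δx`. -/
theorem stmt_3 (A B C xi Δx α β : ℝ) (hA : 0 < A) (hΔx : 0 < Δx)
    (lam₁ lam₂ : ℝ)
    (hlam₁ : lam₁ = (C + Real.sqrt (C ^ 2 + 4 * A)) / 2)
    (hlam₂ : lam₂ = (C - Real.sqrt (C ^ 2 + 4 * A)) / 2)
    (u : ℝ → ℝ)
    (hu : Differentiable ℝ u) (hu' : Differentiable ℝ (deriv u))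
    (hODE : ∀ x : ℝ, deriv (deriv u) x - C * deriv u x - A * u x = B)
    (hbc₁ : u (xi - Δx) = α) (hbc₂ : u (xi + Δx) = β) :
    u xi =
      ((Real.exp (lam₂ * Δx) - Real.exp (lam₁ * Δx)) /
          (Real.exp ((lam₂ - lam₁) * Δx) - Real.exp ((lam₁ - lam₂) * Δx))) * α +
      ((Real.exp (-(lam₁ * Δx)) - Real.exp (-(lam₂ * Δx))) /
          (Real.exp ((lam₂ - lam₁) * Δx) - Real.exp ((lam₁ - lam₂) * Δx))) * β +
      (-(B / A) +
        (B / A) *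
          (Real.exp (lam₂ * Δx) - Real.exp (lam₁ * Δx) +
              Real.exp (-(lam₁ * Δx)) - Real.exp (-(lam₂ * Δx))) /
            (Real.exp ((lam₂ - lam₁) * Δx) - Real.exp ((lam₁ - lam₂) * Δx))) := by
  have hdisc : 0 < C ^ 2 + 4 * A := by positivity
  have hsum : lam₁ + lam₂ = C := by rw [hlam₁, hlam₂]; ring
  have hprod : lam₁ * lam₂ = -A := by
    rw [hlam₁, hlam₂]; linear_combination -sq_sqrt hdisc.le / 4
  have hne : lam₁ ≠ lam₂ := by
    rw [hlam₁, hlam₂]; have := sqrt_pos.mpr hdisc; intro h; linarith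
  obtain ⟨c₁, c₂, hv⟩ := exists_eq_exp_add_exp hne (v := fun x => u x + B / A)
    (fun x => (hu x).hasDerivAt.add_const _) (fun x => (hu' x).hasDerivAt)
    (fun x => by rw [hsum, hprod]; field_simp; linear_combination hODE x)
  have hmid := eq_midpointWeight_of_eq_exp_add_exp hne hΔx.ne' hv xi
  simp only [hbc₁, hbc₂, midpointWeightLeft, midpointWeightRight] at hmid
  linear_combination hmid
end

section
/- Let ā > 0, d̄ ∈ ℝ, u₀ ∈ ℝ, and 𝒰ⁿ, 𝒰^{n+1} ∈ ℝ. For Δt > 0 set a₀ = 𝒰ⁿ and a₁ = (𝒰^{n+1} − 𝒰ⁿ)/Δt, and define u(Δt) = e^{−2ā·Δt}·(u₀ − (d̄/ā)·(a₀/2 − a₁/(4ā))) + (d̄/ā)·(a₀/2 + (a₁/2)·(Δt − 1/(2ā))). Then u(Δt) tends to (d̄/ā)·𝒰^{n+1}/2 as Δt → ∞. -/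
/-!
The solution is a transient `exp (-2 ā Δt) · C(Δt)` plus a steady part. The bracket `C(Δt)`
converges because the interpolation slope `a₁ = (𝒰^{n+1} - 𝒰ⁿ)/Δt` tends to `0`, so the transient
dies out. In the steady part `a₀/2 + (a₁/2)(Δt - 1/(2ā))`, the factor `a₁ Δt = 𝒰^{n+1} - 𝒰ⁿ` is
fixed while the shift `1/(2ā)` only contributes `O(1/Δt)`, so it tends to `𝒰^{n+1}/2`.
-/

open Real Filter Topology

theorem tendsto_exp_mul_atTop_nhds_zero_of_neg {r : ℝ} (hr : r < 0) :
    Tendsto (fun t : ℝ => exp (r * t)) atTop (𝓝 0) :=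
  tendsto_exp_atBot.comp (tendsto_id.const_mul_atTop_of_neg hr)

theorem tendsto_add_div_mul_sub_atTop (x d c : ℝ) :
    Tendsto (fun t : ℝ => x + d / t * (t - c)) atTop (𝓝 (x + d)) := by
  have hdecay : Tendsto (fun t : ℝ => d * c / t) atTop (𝓝 0) :=
    tendsto_const_nhds.div_atTop tendsto_id
  have hlim : Tendsto (fun t : ℝ => x + d - d * c / t) atTop (𝓝 (x + d)) := by
    simpa using tendsto_const_nhds.sub hdecay
  refine hlim.congr' ?_
  filter_upwards [eventually_ne_atTop 0] with t ht
  field_simp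
  ring

/-- P = 1 case: the first-order temporal-ODE update for the diffusion operator
(zero source) tends to the fully-implicit update `(d̄/ā)·𝒰^{n+1}/2` as `Δt → ∞`. -/
theorem stmt_6 (abar dbar u₀ Un Un1 : ℝ) (habar : 0 < abar) :
    Tendsto
      (fun Δt : ℝ =>
        Real.exp (-2 * abar * Δt) *
            (u₀ - (dbar / abar) * (Un / 2 - ((Un1 - Un) / Δt) / (4 * abar))) +
          (dbar / abar) *
            (Un / 2 + (((Un1 - Un) / Δt) / 2) * (Δt - 1 / (2 * abar))))
      atTop (nhds ((dbar / abar) * Un1 / 2)) := by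
  have hslope : Tendsto (fun Δt : ℝ => (Un1 - Un) / Δt) atTop (𝓝 0) :=
    tendsto_const_nhds.div_atTop tendsto_id
  have hbracket : Tendsto (fun Δt : ℝ =>
      u₀ - dbar / abar * (Un / 2 - (Un1 - Un) / Δt / (4 * abar))) atTop
      (𝓝 (u₀ - dbar / abar * (Un / 2 - 0 / (4 * abar)))) :=
    tendsto_const_nhds.sub (tendsto_const_nhds.mul
      (tendsto_const_nhds.sub (hslope.div_const _)))
  have htransient :=
    (tendsto_exp_mul_atTop_nhds_zero_of_neg (r := -2 * abar) (by linarith)).mul hbracket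
  have hsteady := tendsto_add_div_mul_sub_atTop (Un / 2) ((Un1 - Un) / 2) (1 / (2 * abar))
  convert htransient.add (hsteady.const_mul (dbar / abar)) using 2 with Δt
  · ring
  · ring
end

section
/- Let ā > 0, d̄ ∈ ℝ, u₀ ∈ ℝ, and 𝒰ⁿ, 𝒰^{n+1/2}, 𝒰^{n+1} ∈ ℝ. For Δt > 0 set a₀ = 𝒰ⁿ, a₁ = (−3𝒰ⁿ + 4𝒰^{n+1/2} − 𝒰^{n+1})/Δt, and a₂ = (2𝒰ⁿ − 4𝒰^{n+1/2} + 2𝒰^{n+1})/(Δt)², and define u(Δt) = e^{−2ā·Δt}·(u₀ − (d̄/ā)·(a₀/2 − a₁/(4ā) + a₂/(4ā²))) + (d̄/ā)·(a₀/2 + (a₁/2)·(Δt − 1/(2ā)) + (a₂/2)·(1/(2ā²) − Δt/ā + (Δt)²)). Then u(Δt) tends to (d̄/ā)·𝒰^{n+1}/2 as Δt → ∞. -/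
/-!
The update is the value at `τ = Δt` of the solution of `u' = -2ā u + d̄ p(τ)`, `u(0) = u₀`,
where `p = a₀ + a₁ τ + a₂ τ²` interpolates the samples. It splits into the free part
`e^{-2āτ} (u₀ - u_p(0))` and the forced response `u_p = (d̄/ā) (p/2 - p'/(4ā) + p''/(8ā²))`.
As `Δt → ∞` the free part decays, since `a₁, a₂ → 0` keep its coefficient bounded, while in the
forced response `p(Δt) = 𝒰^{n+1}` exactly by interpolation and `p'(Δt), p''(Δt) = O(1/Δt)`.
-/

open Real Filter Topology

/-- The forced response `u_p` divided by `d̄/ā`, for the forcing `a₀ + a₁ t + a₂ t²`. -/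
noncomputable def forcedResponse (a a₀ a₁ a₂ t : ℝ) : ℝ :=
  a₀ / 2 + a₁ / 2 * (t - 1 / (2 * a)) + a₂ / 2 * (1 / (2 * a ^ 2) - t / a + t ^ 2)

lemma forcedResponse_eq {a : ℝ} (ha : a ≠ 0) (a₀ a₁ a₂ t : ℝ) :
    forcedResponse a a₀ a₁ a₂ t =
      (a₀ + a₁ * t + a₂ * t ^ 2) / 2 - (a₁ + 2 * a₂ * t) / (4 * a) + a₂ / (4 * a ^ 2) := by
  unfold forcedResponse
  field_simp
  ring

lemma tendsto_forcedResponse {a : ℝ} (ha : a ≠ 0) {a₀ P : ℝ} {a₁ a₂ : ℝ → ℝ}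
    (hval : Tendsto (fun t => a₀ + a₁ t * t + a₂ t * t ^ 2) atTop (𝓝 P))
    (hslope : Tendsto (fun t => a₁ t + 2 * a₂ t * t) atTop (𝓝 0))
    (hcurv : Tendsto a₂ atTop (𝓝 0)) :
    Tendsto (fun t => forcedResponse a a₀ (a₁ t) (a₂ t) t) atTop (𝓝 (P / 2)) := by
  simp_rw [forcedResponse_eq ha]
  simpa using ((hval.div_const 2).sub (hslope.div_const (4 * a))).add (hcurv.div_const (4 * a ^ 2))

lemma quadInterp_eval_right (U₀ U₁ U₂ : ℝ) {t : ℝ} (ht : t ≠ 0) :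
    U₀ + (-3 * U₀ + 4 * U₁ - U₂) / t * t + (2 * U₀ - 4 * U₁ + 2 * U₂) / t ^ 2 * t ^ 2 = U₂ := by
  field_simp
  ring

lemma tendsto_forcedResponse_quadInterp {a : ℝ} (ha : a ≠ 0) (U₀ U₁ U₂ : ℝ) :
    Tendsto (fun t => forcedResponse a U₀ ((-3 * U₀ + 4 * U₁ - U₂) / t)
      ((2 * U₀ - 4 * U₁ + 2 * U₂) / t ^ 2) t) atTop (𝓝 (U₂ / 2)) := by
  set A := -3 * U₀ + 4 * U₁ - U₂
  set B := 2 * U₀ - 4 * U₁ + 2 * U₂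
  have hval : Tendsto (fun t : ℝ => U₀ + A / t * t + B / t ^ 2 * t ^ 2) atTop (𝓝 U₂) :=
    tendsto_const_nhds.congr' <| (eventually_ne_atTop 0).mono fun t ht =>
      (quadInterp_eval_right U₀ U₁ U₂ ht).symm
  have hslope : Tendsto (fun t : ℝ => A / t + 2 * (B / t ^ 2) * t) atTop (𝓝 0) := by
    refine (tendsto_const_nhds.div_atTop tendsto_id : Tendsto (fun t : ℝ => (A + 2 * B) / t) _ _)
      |>.congr' <| (eventually_ne_atTop 0).mono fun t ht => ?_
    field_simp
  exact tendsto_forcedResponse ha hval hslope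
    (tendsto_const_nhds.div_atTop (tendsto_pow_atTop two_ne_zero))

lemma tendsto_exp_mul_atTop_of_neg {k : ℝ} (hk : k < 0) :
    Tendsto (fun t => exp (k * t)) atTop (𝓝 0) :=
  tendsto_exp_comp_nhds_zero.mpr (tendsto_id.const_mul_atTop_of_neg hk)

/-- P = 2 case: the second-order temporal-ODE update for the diffusion operator
(zero source) tends to the fully-implicit update `(d̄/ā)·𝒰^{n+1}/2` as `Δt → ∞`. -/
theorem stmt_7 (abar dbar u₀ Un Unh Un1 : ℝ) (habar : 0 < abar) :
    Tendsto
      (fun Δt : ℝ =>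
        Real.exp (-2 * abar * Δt) *
            (u₀ - (dbar / abar) *
              (Un / 2 - ((-3 * Un + 4 * Unh - Un1) / Δt) / (4 * abar) +
                ((2 * Un - 4 * Unh + 2 * Un1) / Δt ^ 2) / (4 * abar ^ 2))) +
          (dbar / abar) *
            (Un / 2 +
              (((-3 * Un + 4 * Unh - Un1) / Δt) / 2) * (Δt - 1 / (2 * abar)) +
              (((2 * Un - 4 * Unh + 2 * Un1) / Δt ^ 2) / 2) *
                (1 / (2 * abar ^ 2) - Δt / abar + Δt ^ 2)))
      atTop (nhds ((dbar / abar) * Un1 / 2)) := by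
  have ha₁ : Tendsto (fun t : ℝ => (-3 * Un + 4 * Unh - Un1) / t) atTop (𝓝 0) :=
    tendsto_const_nhds.div_atTop tendsto_id
  have ha₂ : Tendsto (fun t : ℝ => (2 * Un - 4 * Unh + 2 * Un1) / t ^ 2) atTop (𝓝 0) :=
    tendsto_const_nhds.div_atTop (tendsto_pow_atTop two_ne_zero)
  have hfree := (tendsto_exp_mul_atTop_of_neg (by linarith : -2 * abar < 0)).mul <|
    tendsto_const_nhds (x := u₀) |>.sub <|
      ((tendsto_const_nhds (x := Un / 2)).sub (ha₁.div_const (4 * abar))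
        |>.add (ha₂.div_const (4 * abar ^ 2))).const_mul (dbar / abar)
  have hforced :=
    (tendsto_forcedResponse_quadInterp habar.ne' Un Unh Un1).const_mul (dbar / abar)
  have hlim := hfree.add hforced
  rw [zero_mul, zero_add, ← mul_div_assoc] at hlim
  exact hlim
end

section
/- Let P ≥ 1 be a natural number, ā > 0, d̄ ∈ ℝ, u₀ ∈ ℝ, and U = (U₀, …, U_P) ∈ ℝ^{P+1} a fixed vector. For Δt > 0, let T_K = K·Δt/P for K = 0, …, P, let M(Δt) be the (P+1)×(P+1) matrix with entries M(Δt)_{K,p} = (T_K)^p, and let a(Δt) = (a₀, …, a_P) be the unique solution of M(Δt)·a = U. Define u(Δt) = (u₀ − (d̄/ā)·Σ_{p=0}^{P} (a_p/2)·(−1)^p p!/(2ā)^p)·e^{−2ā·Δt} + (d̄/ā)·Σ_{p=0}^{P} (a_p/2)·Σ_{q=0}^{p} (Δt)^{p−q}·(−1)^q p!/((2ā)^q (p−q)!). Then M(Δt) is invertible and u(Δt) tends to (d̄/ā)·U_P/2 as Δt → ∞. -/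
/-!
The nodes `K Δt / P` are `Δt` times the fixed distinct nodes `K / P`, so `M(Δt)` is an
invertible Vandermonde matrix and `a(Δt)_p = c_p / Δt ^ p`, where `c` interpolates `U` on the
nodes `K / P`. In the variables `s = 1/Δt` and `e = exp(-2 ā Δt)` the update is continuous up to
`s = e = 0`, where only the `q = 0` terms survive and leave `(d̄/ā) ∑ c_p / 2`; the interpolant
evaluated at the last node `1` gives `∑ c_p = U_P`.
-/

open Real Filter Finset

namespace Matrix

variable {n : ℕ}

theorem vandermonde_smul_mulVec {R : Type*} [CommRing R] (t : R) (v c : Fin n → R) :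
    vandermonde (t • v) *ᵥ c = vandermonde v *ᵥ fun j => t ^ (j : ℕ) * c j := by
  ext i
  simp only [mulVec, dotProduct, vandermonde_apply, Pi.smul_apply, smul_eq_mul, mul_pow]
  exact sum_congr rfl fun j _ => by ring

theorem vandermonde_mulVec_apply_of_eq_one {R : Type*} [CommRing R] {v : Fin n → R} {i : Fin n}
    (hv : v i = 1) (c : Fin n → R) : (vandermonde v *ᵥ c) i = ∑ j, c j := by
  simp [mulVec, dotProduct, vandermonde_apply, hv]

variable {K : Type*} [Field K] {v : Fin n → K}

theorem isUnit_det_vandermonde (hv : Function.Injective v) : IsUnit (vandermonde v).det :=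
  isUnit_iff_ne_zero.mpr (det_vandermonde_ne_zero_iff.mpr hv)

theorem mulVec_injective_vandermonde (hv : Function.Injective v) :
    Function.Injective (vandermonde v).mulVec :=
  mulVec_injective_of_isUnit ((isUnit_iff_isUnit_det _).mpr (isUnit_det_vandermonde hv))

theorem eq_mul_inv_pow_of_vandermonde_smul_mulVec_eq (hv : Function.Injective v) {t : K}
    (ht : t ≠ 0) {a c : Fin n → K} (h : vandermonde (t • v) *ᵥ a = vandermonde v *ᵥ c) :
    a = fun j => c j * t⁻¹ ^ (j : ℕ) := by
  rw [vandermonde_smul_mulVec] at h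
  funext j
  rw [← congrFun (mulVec_injective_vandermonde hv h) j, inv_pow, mul_comm, ← mul_assoc,
    inv_mul_cancel₀ (pow_ne_zero _ ht), one_mul]

end Matrix

section MultistageUpdate

variable {n : ℕ} (abar dbar u₀ : ℝ)

noncomputable def multistageUpdate (a : Fin n → ℝ) (Δt : ℝ) : ℝ :=
  (u₀ - (dbar / abar) * ∑ p : Fin n,
      (a p / 2) * (-1 : ℝ) ^ (p : ℕ) * (Nat.factorial (p : ℕ) : ℝ) / (2 * abar) ^ (p : ℕ)) *
    exp (-2 * abar * Δt) +
  (dbar / abar) * ∑ p : Fin n,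
    (a p / 2) * ∑ q ∈ range ((p : ℕ) + 1),
      Δt ^ ((p : ℕ) - q) * (-1 : ℝ) ^ q * (Nat.factorial (p : ℕ) : ℝ) /
        ((2 * abar) ^ q * (Nat.factorial ((p : ℕ) - q) : ℝ))

/-- `multistageUpdate` in the variables `s = 1/Δt`, `e = exp(-2 ā Δt)` and `c p = Δt ^ p * a p`. -/
noncomputable def multistageUpdateScaled (c : Fin n → ℝ) (s e : ℝ) : ℝ :=
  (u₀ - (dbar / abar) * ∑ p : Fin n,
      (c p * s ^ (p : ℕ) / 2) * (-1 : ℝ) ^ (p : ℕ) * (Nat.factorial (p : ℕ) : ℝ) /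
        (2 * abar) ^ (p : ℕ)) * e +
  (dbar / abar) * ∑ p : Fin n,
    (c p / 2) * ∑ q ∈ range ((p : ℕ) + 1),
      s ^ q * (-1 : ℝ) ^ q * (Nat.factorial (p : ℕ) : ℝ) /
        ((2 * abar) ^ q * (Nat.factorial ((p : ℕ) - q) : ℝ))

theorem multistageUpdate_mul_inv_pow (c : Fin n → ℝ) {t : ℝ} (ht : t ≠ 0) :
    multistageUpdate abar dbar u₀ (fun p => c p * t⁻¹ ^ (p : ℕ)) t =
      multistageUpdateScaled abar dbar u₀ c t⁻¹ (exp (-2 * abar * t)) := by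
  have hpow : ∀ p q : ℕ, q ≤ p → t⁻¹ ^ p * t ^ (p - q) = t⁻¹ ^ q := fun p q hqp => by
    rw [pow_sub₀ t ht hqp, inv_pow, inv_pow, ← mul_assoc, inv_mul_cancel₀ (pow_ne_zero _ ht),
      one_mul]
  unfold multistageUpdate multistageUpdateScaled
  congr 2
  refine sum_congr rfl fun p _ => ?_
  rw [mul_sum, mul_sum]
  refine sum_congr rfl fun q hq => ?_
  rw [← hpow p q (Nat.lt_succ_iff.mp (mem_range.mp hq))]
  ring

theorem continuous_multistageUpdateScaled (c : Fin n → ℝ) :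
    Continuous (Function.uncurry (multistageUpdateScaled abar dbar u₀ c)) := by
  unfold multistageUpdateScaled Function.uncurry
  fun_prop

theorem multistageUpdateScaled_zero_zero (c : Fin n → ℝ) :
    multistageUpdateScaled abar dbar u₀ c 0 0 = dbar / abar * (∑ p, c p) / 2 := by
  have hconst : ∀ p : ℕ, ∑ q ∈ range (p + 1), (0 : ℝ) ^ q * (-1 : ℝ) ^ q *
      (Nat.factorial p : ℝ) / ((2 * abar) ^ q * (Nat.factorial (p - q) : ℝ)) = 1 := fun p => by
    rw [sum_range_succ']
    simp [Nat.factorial_ne_zero]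
  simp only [multistageUpdateScaled, mul_zero, zero_add, hconst, mul_one]
  rw [mul_div_assoc, ← sum_div]

theorem tendsto_multistageUpdate (habar : 0 < abar) (c : Fin n → ℝ) :
    Tendsto (fun t => multistageUpdate abar dbar u₀ (fun p => c p * t⁻¹ ^ (p : ℕ)) t) atTop
      (nhds (dbar / abar * (∑ p, c p) / 2)) := by
  have hexp : Tendsto (fun t => exp (-2 * abar * t)) atTop (nhds 0) :=
    tendsto_exp_atBot.comp (tendsto_id.const_mul_atTop_of_neg (by linarith))
  have hlim := ((continuous_multistageUpdateScaled abar dbar u₀ c).tendsto (0, 0)).comp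
    (tendsto_inv_atTop_zero.prodMk_nhds hexp)
  rw [← multistageUpdateScaled_zero_zero abar dbar u₀]
  refine hlim.congr' ?_
  filter_upwards [eventually_ne_atTop 0] with t ht
  exact (multistageUpdate_mul_inv_pow abar dbar u₀ c ht).symm

end MultistageUpdate

/-- General proposition: the P-th order multi-stage temporal-ODE update formula
for the diffusion operator with zero source, built from the interpolation
coefficients `a(Δt)` solving the Vandermonde system `M(Δt)·a = U` at equidistant
nodes `T_K = K·Δt/P`, converges to the fully-implicit update `(d̄/ā)·U_P/2`
as `Δt → ∞`; moreover `M(Δt)` is invertible. -/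
theorem stmt_8 (P : ℕ) (hP : 1 ≤ P) (abar dbar u₀ : ℝ) (habar : 0 < abar)
    (U : Fin (P + 1) → ℝ)
    (M : ℝ → Matrix (Fin (P + 1)) (Fin (P + 1)) ℝ)
    (hM : M = fun Δt => Matrix.of fun K p : Fin (P + 1) =>
      ((K : ℕ) * Δt / (P : ℝ)) ^ (p : ℕ))
    (a : ℝ → Fin (P + 1) → ℝ)
    (ha : ∀ Δt : ℝ, 0 < Δt → (M Δt).mulVec (a Δt) = U)
    (u : ℝ → ℝ)
    (hu : u = fun Δt =>
      (u₀ - (dbar / abar) * ∑ p : Fin (P + 1),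
          (a Δt p / 2) * (-1 : ℝ) ^ (p : ℕ) * (Nat.factorial (p : ℕ) : ℝ) /
            (2 * abar) ^ (p : ℕ)) *
        Real.exp (-2 * abar * Δt) +
      (dbar / abar) * ∑ p : Fin (P + 1),
        (a Δt p / 2) * ∑ q ∈ Finset.range ((p : ℕ) + 1),
          Δt ^ ((p : ℕ) - q) * (-1 : ℝ) ^ q * (Nat.factorial (p : ℕ) : ℝ) /
            ((2 * abar) ^ q * (Nat.factorial ((p : ℕ) - q) : ℝ))) :
    (∀ Δt : ℝ, 0 < Δt → IsUnit (M Δt).det) ∧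
      Tendsto u atTop (nhds ((dbar / abar) * U (Fin.last P) / 2)) := by
  have hP₀ : (P : ℝ) ≠ 0 := Nat.cast_ne_zero.mpr (by omega)
  set x : Fin (P + 1) → ℝ := fun K => (K : ℕ) / (P : ℝ)
  have hx : Function.Injective x := fun i j hij =>
    Fin.ext (by exact_mod_cast ((div_left_inj' hP₀).mp hij : ((i : ℕ) : ℝ) = (j : ℕ)))
  have hMx : ∀ Δt, M Δt = Matrix.vandermonde (Δt • x) := fun Δt => by
    subst hM
    ext K p
    simp only [Matrix.of_apply, Matrix.vandermonde_apply, Pi.smul_apply, smul_eq_mul, x]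
    ring
  have hdet : ∀ Δt : ℝ, 0 < Δt → IsUnit (M Δt).det := fun Δt hΔt =>
    hMx Δt ▸ Matrix.isUnit_det_vandermonde ((mul_right_injective₀ hΔt.ne').comp hx)
  have hU : U = (Matrix.vandermonde x).mulVec (a 1) := by rw [← ha 1 one_pos, hMx, one_smul]
  have hscale : ∀ Δt : ℝ, 0 < Δt → a Δt = fun p => a 1 p * Δt⁻¹ ^ (p : ℕ) := fun Δt hΔt =>
    Matrix.eq_mul_inv_pow_of_vandermonde_smul_mulVec_eq hx hΔt.ne' (by rw [← hMx, ha Δt hΔt, hU])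
  have hlast : U (Fin.last P) = ∑ p, a 1 p :=
    hU ▸ Matrix.vandermonde_mulVec_apply_of_eq_one (by simp [x, hP₀]) _
  refine ⟨hdet, ?_⟩
  rw [hlast]
  refine (tendsto_multistageUpdate abar dbar u₀ habar (a 1)).congr' ?_
  filter_upwards [eventually_gt_atTop 0] with Δt hΔt
  rw [hu, ← hscale Δt hΔt]
  rfl
end
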